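/- Let T_k be the k-th jumping time of a monotone Mallows process, so that P(T_k > t) = π_{n,t}(Inv ≤ k−1). Then for fixed k, as n → ∞, n·T_k converges in distribution to a Gamma(k,1) random variable; equivalently, P(n·T_k > t) → e^{−t} ∑_{ℓ=0}^{k-1} t^ℓ/ℓ! for every t ≥ 0. -/

import Mathlib

/-!
Put `x = t/n`. The numerator of `G n x` is `∑_{ℓ<k} (S_n^ℓ / n^ℓ) t^ℓ`, and `S_n^ℓ ~ n^ℓ/ℓ!`:
the Lehmer code embeds the permutations with `ℓ` inversions into the multisets of size `ℓ` on
`n` letters, so `S_n^ℓ ≤ C(n+ℓ-1, ℓ)`; conversely, a product of `ℓ` pairwise non-adjacent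
transpositions `(a a+1)` has exactly `ℓ` inversions, and there are `C(n-ℓ, ℓ)` of them. The
denominator `∏_{m ≤ n} (1 + x + ⋯ + x^{m-1})` lies between `(1+x)^{n-1}` and `(1-x)^{-n}`, and both
bounds tend to `e^t`.
-/

open Filter

/-- Total number of inversions of a permutation of `Fin n`. -/
def InvCount (n : ℕ) (σ : Equiv.Perm (Fin n)) : ℕ :=
  (Finset.univ.filter (fun p : Fin n × Fin n => p.1 < p.2 ∧ σ p.2 < σ p.1)).card

/-- The number of permutations of `[n]` with exactly `ℓ` inversions. -/
def numPermsWithInv (n ℓ : ℕ) : ℕ :=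
  (Finset.univ.filter (fun σ : Equiv.Perm (Fin n) => InvCount n σ = ℓ)).card

open Finset
open scoped Nat Topology

theorem Finset.strictMonoOn_card_filter_lt {α : Type*} [LinearOrder α] (s : Finset α) :
    StrictMonoOn (fun x => #{z ∈ s | z < x}) s := by
  intro x hx y _ hxy
  refine card_lt_card <| (ssubset_iff_of_subset fun z hz => ?_).2
    ⟨x, mem_filter.2 ⟨hx, hxy⟩, fun h => (mem_filter.1 h).2.false⟩
  rw [mem_filter] at hz ⊢
  exact ⟨hz.1, hz.2.trans hxy⟩

section LehmerCode

variable {n : ℕ}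

def lehmerCode (σ : Equiv.Perm (Fin n)) (i : Fin n) : ℕ :=
  #{j | i < j ∧ σ j < σ i}

theorem sum_lehmerCode (σ : Equiv.Perm (Fin n)) : ∑ i, lehmerCode σ i = InvCount n σ := by
  simp only [lehmerCode, InvCount, card_filter]
  rw [Fintype.sum_prod_type]

theorem lehmerCode_eq_card_filter (σ : Equiv.Perm (Fin n)) (i : Fin n) :
    lehmerCode σ i = #{v ∈ univ.filter (fun v => i ≤ σ.symm v) | v < σ i} := by
  rw [filter_filter, lehmerCode]
  refine card_equiv σ fun j => ?_
  simp only [mem_filter, mem_univ, true_and, Equiv.symm_apply_apply]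
  refine ⟨fun h => ⟨h.1.le, h.2⟩, fun h => ⟨lt_of_le_of_ne h.1 ?_, h.2⟩⟩
  rintro rfl
  exact h.2.false

/-- If `σ` and `τ` agree below `i`, then `σ i` and `τ i` lie in the same set of remaining values,
where both have rank `lehmerCode · i`. -/
theorem lehmerCode_injective : Function.Injective (lehmerCode (n := n)) := by
  intro σ τ h
  ext1 i
  induction i using WellFoundedLT.induction with
  | ind i ih =>
    have hsymm : ∀ v, σ.symm v < i ∨ τ.symm v < i → σ.symm v = τ.symm v := by
      rintro v (hv | hv)
      · rw [eq_comm, Equiv.symm_apply_eq, ← ih _ hv, Equiv.apply_symm_apply]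
      · rw [Equiv.symm_apply_eq, ih _ hv, Equiv.apply_symm_apply]
    have hW : univ.filter (fun v => i ≤ σ.symm v) = univ.filter (fun v => i ≤ τ.symm v) := by
      ext v
      simp only [mem_filter, mem_univ, true_and]
      constructor <;> intro hv <;> by_contra hv' <;> rw [not_le] at hv'
      · exact hv'.not_ge (hsymm v (.inr hv') ▸ hv)
      · exact hv'.not_ge ((hsymm v (.inl hv')).symm ▸ hv)
    refine (strictMonoOn_card_filter_lt (univ.filter fun v => i ≤ σ.symm v)).injOn
      (by simp) (by rw [hW]; simp) ?_
    rw [← lehmerCode_eq_card_filter, hW, ← lehmerCode_eq_card_filter, h]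

theorem numPermsWithInv_le_choose (n ℓ : ℕ) : numPermsWithInv n ℓ ≤ (n + ℓ - 1).choose ℓ := by
  let code (σ : {σ : Equiv.Perm (Fin n) // InvCount n σ = ℓ}) : Sym (Fin n) ℓ :=
    (Sym.equivNatSumOfFintype _ _).symm ⟨lehmerCode σ.1, (sum_lehmerCode _).trans σ.2⟩
  have hcode : Function.Injective code := fun σ τ h =>
    Subtype.ext <| lehmerCode_injective <| congrArg Subtype.val <| Equiv.injective _ h
  calc numPermsWithInv n ℓ = Fintype.card {σ : Equiv.Perm (Fin n) // InvCount n σ = ℓ} :=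
        (Fintype.card_subtype _).symm
    _ ≤ Fintype.card (Sym (Fin n) ℓ) := Fintype.card_le_of_injective code hcode
    _ = (n + ℓ - 1).choose ℓ := by rw [Sym.card_sym_eq_choose, Fintype.card_fin]

end LehmerCode

section AdjacentSwaps

/-- When no two elements of `A` are adjacent, this is the product of the transpositions `(a a+1)`,
`a ∈ A`, acting on `ℕ`. -/
def adjSwaps (A : Finset ℕ) (x : ℕ) : ℕ :=
  if x ∈ A then x + 1 else if x - 1 ∈ A ∧ x ≠ 0 then x - 1 else x

variable {A : Finset ℕ}

theorem adjSwaps_of_mem {x : ℕ} (h : x ∈ A) : adjSwaps A x = x + 1 := by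
  simp [adjSwaps, h]

theorem adjSwaps_le_of_notMem {x : ℕ} (h : x ∉ A) : adjSwaps A x ≤ x := by
  unfold adjSwaps; split_ifs <;> omega

theorem adjSwaps_le_succ (x : ℕ) : adjSwaps A x ≤ x + 1 := by
  unfold adjSwaps; split_ifs <;> omega

theorem le_adjSwaps_succ (x : ℕ) : x ≤ adjSwaps A x + 1 := by
  unfold adjSwaps; split_ifs <;> omega

theorem adjSwaps_eq_succ_iff {x : ℕ} : adjSwaps A x = x + 1 ↔ x ∈ A :=
  ⟨fun h => by_contra fun hx => by have := adjSwaps_le_of_notMem hx; omega, adjSwaps_of_mem⟩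

theorem adjSwaps_lt {n : ℕ} (hA : ∀ a ∈ A, a + 1 < n) {x : ℕ} (hx : x < n) :
    adjSwaps A x < n := by
  unfold adjSwaps; split_ifs with h
  · exact hA x h
  all_goals omega

variable (hgap : ∀ a ∈ A, a + 1 ∉ A)
include hgap

theorem adjSwaps_succ_of_mem {a : ℕ} (h : a ∈ A) : adjSwaps A (a + 1) = a := by
  simp [adjSwaps, hgap a h, h]

theorem adjSwaps_involutive : Function.Involutive (adjSwaps A) := by
  intro x
  by_cases hx : x ∈ A
  · rw [adjSwaps_of_mem hx, adjSwaps_succ_of_mem hgap hx]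
  by_cases hx' : x - 1 ∈ A ∧ x ≠ 0
  · obtain ⟨a, rfl⟩ : ∃ a, x = a + 1 := ⟨x - 1, by omega⟩
    rw [Nat.add_sub_cancel] at hx'
    rw [adjSwaps_succ_of_mem hgap hx'.1, adjSwaps_of_mem hx'.1]
  · simp [adjSwaps, hx, hx']

theorem adjSwaps_lt_adjSwaps_iff {i j : ℕ} (hij : i < j) :
    adjSwaps A j < adjSwaps A i ↔ i ∈ A ∧ j = i + 1 := by
  constructor
  · intro h
    have hj := (le_adjSwaps_succ (A := A) j).trans_lt (Nat.succ_lt_succ h)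
    have hi := adjSwaps_le_succ (A := A) i
    refine ⟨by_contra fun hiA => ?_, by omega⟩
    have := adjSwaps_le_of_notMem hiA
    omega
  · rintro ⟨hi, rfl⟩
    rw [adjSwaps_of_mem hi, adjSwaps_succ_of_mem hgap hi]
    omega

variable {n : ℕ} (hA : ∀ a ∈ A, a + 1 < n)

def adjSwapsPerm : Equiv.Perm (Fin n) :=
  Function.Involutive.toPerm (fun x => ⟨adjSwaps A x, adjSwaps_lt hA x.2⟩)
    fun x => Fin.ext (adjSwaps_involutive hgap x)

theorem adjSwapsPerm_apply_val (x : Fin n) : (adjSwapsPerm hgap hA x : ℕ) = adjSwaps A x := rfl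

theorem invCount_adjSwapsPerm : InvCount n (adjSwapsPerm hgap hA) = #A := by
  have hinv : ∀ p : Fin n × Fin n,
      p ∈ univ.filter (fun p : Fin n × Fin n => p.1 < p.2 ∧ adjSwapsPerm hgap hA p.2 <
        adjSwapsPerm hgap hA p.1) ↔ (p.1 : ℕ) ∈ A ∧ (p.2 : ℕ) = p.1 + 1 := by
    rintro ⟨i, j⟩
    simp only [mem_filter, mem_univ, true_and, Fin.lt_def, adjSwapsPerm_apply_val]
    constructor
    · rintro ⟨hij, h⟩
      exact (adjSwaps_lt_adjSwaps_iff hgap hij).1 h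
    · rintro ⟨hi, hj⟩
      exact ⟨by omega, (adjSwaps_lt_adjSwaps_iff hgap (by omega)).2 ⟨hi, hj⟩⟩
  refine card_nbij (fun p => (p.1 : ℕ)) (fun p hp => ((hinv p).1 hp).1) ?_ ?_
  · intro p hp q hq hpq
    have hp := (hinv p).1 hp
    have hq := (hinv q).1 hq
    exact Prod.ext (Fin.ext hpq) (Fin.ext (by simp_all))
  · intro a ha
    exact ⟨(⟨a, by have := hA a ha; omega⟩, ⟨a + 1, hA a ha⟩), (hinv _).2 ⟨ha, rfl⟩, rfl⟩

end AdjacentSwaps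

theorem eq_of_adjSwapsPerm_eq {n : ℕ} {A B : Finset ℕ} (hgapA : ∀ a ∈ A, a + 1 ∉ A)
    (hgapB : ∀ b ∈ B, b + 1 ∉ B) (hA : ∀ a ∈ A, a + 1 < n) (hB : ∀ b ∈ B, b + 1 < n)
    (h : adjSwapsPerm hgapA hA = adjSwapsPerm hgapB hB) : A = B := by
  ext a
  by_cases han : a + 1 < n
  · have := congrArg (fun σ : Equiv.Perm (Fin n) => (σ ⟨a, by omega⟩ : ℕ) = a + 1) h
    simpa only [adjSwapsPerm_apply_val, adjSwaps_eq_succ_iff, eq_iff_iff] using this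
  · exact iff_of_false (fun ha => han (hA a ha)) (fun hb => han (hB a hb))

section Spread

variable {m ℓ : ℕ} (S : {s : Finset (Fin m) // #s = ℓ})

/-- Shifting the `j`-th smallest element of an `ℓ`-subset of `Fin m` by `j` yields an `ℓ`-subset
of `[0, m + ℓ - 1)` with no two adjacent elements. -/
def spreadFun (j : Fin ℓ) : ℕ := S.1.orderEmbOfFin S.2 j + j

theorem spreadFun_add_one_lt {j j' : Fin ℓ} (h : j < j') : spreadFun S j + 1 < spreadFun S j' := by
  have := (S.1.orderEmbOfFin S.2).strictMono h
  rw [Fin.lt_def] at this h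
  unfold spreadFun
  omega

theorem spreadFun_strictMono : StrictMono (spreadFun S) :=
  fun _ _ h => (Nat.lt_succ_self _).trans (spreadFun_add_one_lt S h)

def spread : Finset ℕ := univ.image (spreadFun S)

theorem spread_gap : ∀ a ∈ spread S, a + 1 ∉ spread S := by
  simp only [spread, mem_image, mem_univ, true_and, forall_exists_index, forall_apply_eq_imp_iff]
  rintro j ⟨j', hj'⟩
  rcases lt_or_ge j j' with h | h
  · exact (spreadFun_add_one_lt S h).ne hj'.symm
  · exact (((spreadFun_strictMono S).monotone h).trans_lt (Nat.lt_succ_self _)).ne hj'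

theorem spread_add_one_lt : ∀ a ∈ spread S, a + 1 < m + ℓ := by
  simp only [spread, mem_image, mem_univ, true_and, forall_exists_index, forall_apply_eq_imp_iff]
  intro j
  have := (S.1.orderEmbOfFin S.2 j).isLt
  unfold spreadFun
  omega

theorem card_spread : #(spread S) = ℓ := by
  rw [spread, card_image_of_injective _ (spreadFun_strictMono S).injective, card_univ,
    Fintype.card_fin]

theorem spread_injective : Function.Injective (spread (m := m) (ℓ := ℓ)) := by
  intro S S' h
  have hrange : Set.range (spreadFun S) = Set.range (spreadFun S') := by
    simpa [spread, ← Finset.coe_inj] using h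
  have hfun := ((spreadFun_strictMono S).range_inj (spreadFun_strictMono S')).1 hrange
  have hemb : ⇑(S.1.orderEmbOfFin S.2) = S'.1.orderEmbOfFin S'.2 := by
    ext j
    have := congrFun hfun j
    unfold spreadFun at this
    omega
  apply Subtype.ext
  rw [← image_orderEmbOfFin_univ S.1 S.2, ← image_orderEmbOfFin_univ S'.1 S'.2, hemb]

end Spread

theorem choose_le_numPermsWithInv (m ℓ : ℕ) : m.choose ℓ ≤ numPermsWithInv (m + ℓ) ℓ := by
  calc m.choose ℓ = Fintype.card {s : Finset (Fin m) // #s = ℓ} := by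
        rw [Fintype.card_finset_len, Fintype.card_fin]
    _ ≤ Fintype.card {σ : Equiv.Perm (Fin (m + ℓ)) // InvCount (m + ℓ) σ = ℓ} :=
        Fintype.card_le_of_injective
          (fun S => ⟨adjSwapsPerm (spread_gap S) (spread_add_one_lt S), by
            rw [invCount_adjSwapsPerm, card_spread]⟩)
          fun S S' h => spread_injective <| eq_of_adjSwapsPerm_eq (spread_gap S) (spread_gap S')
            (spread_add_one_lt S) (spread_add_one_lt S') (congrArg Subtype.val h)
    _ = numPermsWithInv (m + ℓ) ℓ := Fintype.card_subtype _

section NumeratorAsymptotics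

theorem sub_pow_div_factorial_le_numPermsWithInv {n ℓ : ℕ} (h : 2 * ℓ ≤ n) :
    ((n : ℝ) - 2 * ℓ) ^ ℓ / ℓ ! ≤ numPermsWithInv n ℓ := by
  obtain ⟨m, rfl⟩ : ∃ m, n = m + ℓ := ⟨n - ℓ, by omega⟩
  have hcast : ((m + ℓ : ℕ) : ℝ) - 2 * ℓ ≤ ((m + 1 - ℓ : ℕ) : ℝ) := by
    rw [Nat.cast_sub (by omega)]; push_cast; linarith
  calc ((m + ℓ : ℕ) - 2 * ℓ : ℝ) ^ ℓ / ℓ ! ≤ ((m + 1 - ℓ : ℕ) : ℝ) ^ ℓ / ℓ ! := by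
        gcongr
        exact sub_nonneg.2 (by exact_mod_cast h)
    _ ≤ m.choose ℓ := Nat.pow_le_choose ℓ m
    _ ≤ numPermsWithInv (m + ℓ) ℓ := mod_cast choose_le_numPermsWithInv m ℓ

theorem numPermsWithInv_le_add_pow_div_factorial (n ℓ : ℕ) :
    (numPermsWithInv n ℓ : ℝ) ≤ ((n : ℝ) + ℓ) ^ ℓ / ℓ ! := by
  calc (numPermsWithInv n ℓ : ℝ) ≤ (n + ℓ).choose ℓ := by
        exact_mod_cast (numPermsWithInv_le_choose n ℓ).trans (Nat.choose_le_choose ℓ (by omega))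
    _ ≤ ((n + ℓ : ℕ) : ℝ) ^ ℓ / ℓ ! := Nat.choose_le_pow_div ℓ (n + ℓ)
    _ = ((n : ℝ) + ℓ) ^ ℓ / ℓ ! := by push_cast; rfl

theorem tendsto_add_pow_div_pow (c : ℝ) (ℓ : ℕ) :
    Tendsto (fun n : ℕ => ((n : ℝ) + c) ^ ℓ / (n : ℝ) ^ ℓ) atTop (𝓝 1) := by
  have h := ((tendsto_const_div_atTop_nhds_zero_nat c).const_add 1).pow ℓ
  rw [add_zero, one_pow] at h
  refine h.congr' ((eventually_ne_atTop 0).mono fun n hn => ?_)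
  dsimp only
  rw [← div_pow, add_div, div_self (Nat.cast_ne_zero.2 hn)]

theorem tendsto_numPermsWithInv_div_pow (ℓ : ℕ) :
    Tendsto (fun n : ℕ => (numPermsWithInv n ℓ : ℝ) / (n : ℝ) ^ ℓ) atTop (𝓝 (ℓ ! : ℝ)⁻¹) := by
  have hlim : ∀ c : ℝ, Tendsto (fun n : ℕ => ((n : ℝ) + c) ^ ℓ / ℓ ! / (n : ℝ) ^ ℓ) atTop
      (𝓝 (ℓ ! : ℝ)⁻¹) := fun c => by
    simpa [div_right_comm _ (ℓ ! : ℝ)] using (tendsto_add_pow_div_pow c ℓ).div_const (ℓ ! : ℝ)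
  refine tendsto_of_tendsto_of_tendsto_of_le_of_le' (hlim (-(2 * ℓ))) (hlim ℓ) ?_ ?_
  · filter_upwards [eventually_ge_atTop (2 * ℓ)] with n hn
    gcongr
    exact sub_eq_add_neg (n : ℝ) _ ▸ sub_pow_div_factorial_le_numPermsWithInv hn
  · exact Eventually.of_forall fun n => by gcongr; exact numPermsWithInv_le_add_pow_div_factorial n ℓ

theorem tendsto_sum_numPermsWithInv_mul_pow (k : ℕ) (t : ℝ) :
    Tendsto (fun n : ℕ => ∑ ℓ ∈ range k, (numPermsWithInv n ℓ : ℝ) * (t / n) ^ ℓ) atTop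
      (𝓝 (∑ ℓ ∈ range k, t ^ ℓ / ℓ !)) := by
  refine tendsto_finsetSum _ fun ℓ _ => ?_
  convert (tendsto_numPermsWithInv_div_pow ℓ).mul_const (t ^ ℓ) using 1
  · ext n
    rw [div_pow]
    ring
  · rw [inv_mul_eq_div]

end NumeratorAsymptotics

section GeomSum

variable {K : Type*} [Field K] [LinearOrder K] [IsStrictOrderedRing K] {x : K}

theorem one_add_le_geom_sum (hx : 0 ≤ x) {m : ℕ} (hm : 2 ≤ m) : 1 + x ≤ ∑ i ∈ range m, x ^ i := by
  calc (1 + x : K) = ∑ i ∈ range 2, x ^ i := by rw [sum_range_succ, sum_range_one, pow_zero, pow_one]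
    _ ≤ ∑ i ∈ range m, x ^ i := by
      apply sum_le_sum_of_subset_of_nonneg (range_subset_range.2 hm)
      exact fun i _ _ => pow_nonneg hx i

theorem geom_sum_le_inv_one_sub (hx0 : 0 ≤ x) (hx1 : x < 1) (m : ℕ) :
    ∑ i ∈ range m, x ^ i ≤ (1 - x)⁻¹ := by
  have h := geom_sum_Ico_le_of_lt_one (m := 0) (n := m) hx0 hx1
  rwa [← range_eq_Ico, pow_zero, one_div] at h

theorem one_add_pow_le_mul_prod_geom_sum (hx : 0 ≤ x) (n : ℕ) :
    (1 + x) ^ n ≤ (1 + x) * ∏ m ∈ Icc 1 n, ∑ i ∈ range m, x ^ i := by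
  induction n with
  | zero => simpa using hx
  | succ n ih =>
    rw [prod_Icc_succ_top (by omega)]
    rcases Nat.eq_zero_or_pos n with rfl | hn
    · simp
    calc (1 + x) ^ (n + 1) = (1 + x) ^ n * (1 + x) := pow_succ _ _
      _ ≤ ((1 + x) * ∏ m ∈ Icc 1 n, ∑ i ∈ range m, x ^ i) * ∑ i ∈ range (n + 1), x ^ i := by
        gcongr
        exact one_add_le_geom_sum hx (by omega)
      _ = _ := mul_assoc _ _ _

theorem prod_geom_sum_le_inv_one_sub_pow (hx0 : 0 ≤ x) (hx1 : x < 1) (n : ℕ) :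
    ∏ m ∈ Icc 1 n, ∑ i ∈ range m, x ^ i ≤ ((1 - x) ^ n)⁻¹ := by
  calc ∏ m ∈ Icc 1 n, ∑ i ∈ range m, x ^ i ≤ ∏ _m ∈ Icc 1 n, (1 - x)⁻¹ :=
        prod_le_prod (fun m _ => sum_nonneg fun i _ => pow_nonneg hx0 i)
          fun m _ => geom_sum_le_inv_one_sub hx0 hx1 m
    _ = ((1 - x) ^ n)⁻¹ := by rw [prod_const, Nat.card_Icc, Nat.add_sub_cancel, inv_pow]

end GeomSum

theorem tendsto_prod_geom_sum {t : ℝ} (ht : 0 ≤ t) :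
    Tendsto (fun n : ℕ => ∏ m ∈ Icc 1 n, ∑ i ∈ range m, (t / n) ^ i) atTop (𝓝 (Real.exp t)) := by
  have hx : Tendsto (fun n : ℕ => t / n) atTop (𝓝 0) := tendsto_const_div_atTop_nhds_zero_nat t
  have hlo : Tendsto (fun n : ℕ => (1 + t / n) ^ n / (1 + t / n)) atTop (𝓝 (Real.exp t)) := by
    have h := (Real.tendsto_one_add_div_pow_exp t).div (hx.const_add 1) (by norm_num)
    rwa [add_zero, div_one] at h
  have hup : Tendsto (fun n : ℕ => ((1 - t / n) ^ n)⁻¹) atTop (𝓝 (Real.exp t)) := by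
    simpa [← sub_eq_add_neg, neg_div, Real.exp_neg] using
      (Real.tendsto_one_add_div_pow_exp (-t)).inv₀ (Real.exp_ne_zero _)
  refine tendsto_of_tendsto_of_tendsto_of_le_of_le' hlo hup ?_ ?_
  · refine Eventually.of_forall fun n => div_le_of_le_mul₀ (by positivity) ?_ ?_
    · exact prod_nonneg fun m _ => sum_nonneg fun i _ => by positivity
    · rw [mul_comm]; exact one_add_pow_le_mul_prod_geom_sum (by positivity) n
  · filter_upwards [hx.eventually (gt_mem_nhds one_pos)] with n hn
    exact prod_geom_sum_le_inv_one_sub_pow (by positivity) hn n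

theorem jump_time_tendsto_gamma_general (k : ℕ)
    (G : ℕ → ℝ → ℝ)
    (hG : ∀ n : ℕ, 1 ≤ n → ∀ t : ℝ, 0 ≤ t →
      G n t = (∑ ℓ ∈ Finset.range k, (numPermsWithInv n ℓ : ℝ) * t ^ ℓ) /
        ∏ m ∈ Finset.Icc 1 n, ∑ ℓ ∈ Finset.range m, t ^ ℓ)
    (t : ℝ) (ht : 0 ≤ t) :
    Tendsto (fun n : ℕ => G n (t / n)) atTop
      (nhds (Real.exp (-t) * ∑ ℓ ∈ Finset.range k, t ^ ℓ / (Nat.factorial ℓ : ℝ))) := by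
  have h := (tendsto_sum_numPermsWithInv_mul_pow k t).div (tendsto_prod_geom_sum ht)
    (Real.exp_ne_zero t)
  rw [div_eq_inv_mul _ (Real.exp t), ← Real.exp_neg] at h
  refine h.congr' ((eventually_ge_atTop 1).mono fun n hn => ?_)
  exact (hG n hn _ (by positivity)).symm

/-- If `T_k` is the `k`-th jumping time of a monotone Mallows process, so that
`G n t := P(T_k > t) = π_{n,t}(Inv ≤ k−1) = (∑_{ℓ<k} S_n^ℓ t^ℓ)/∏_{m=1}^n ∑_{ℓ<m} t^ℓ`,
then `P(n T_k > t) = G n (t/n) → e^{−t} ∑_{ℓ=0}^{k-1} t^ℓ/ℓ!`, i.e. `n T_k` converges in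
distribution to a `Gamma(k,1)` random variable. -/
theorem jump_time_tendsto_gamma (k : ℕ) (hk : 1 ≤ k)
    (G : ℕ → ℝ → ℝ)
    (hG : ∀ n : ℕ, 1 ≤ n → ∀ t : ℝ, 0 ≤ t →
      G n t = (∑ ℓ ∈ Finset.range k, (numPermsWithInv n ℓ : ℝ) * t ^ ℓ) /
        ∏ m ∈ Finset.Icc 1 n, ∑ ℓ ∈ Finset.range m, t ^ ℓ)
    (t : ℝ) (ht : 0 ≤ t) :
    Tendsto (fun n : ℕ => G n (t / n)) atTop
      (nhds (Real.exp (-t) * ∑ ℓ ∈ Finset.range k, t ^ ℓ / (Nat.factorial ℓ : ℝ))) :=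
  jump_time_tendsto_gamma_general k G hG t ht
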